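/- Let E = ⊕_{i=0}^p E_i be the grading of the cominuscule g-module E by eigenvalues of the central element z of k (E_i the eigenspace with ⟨χ,z⟩ = z_max - 2i), and let V = ⊕_i V_i ⊆ E be the subspace where V_i = ⊕_{χ : ⟨χ,h⟩ = r - 2i, χ weight of E_i} E_χ, for h = α₁^∨ + ... + α_r^∨ a dominant orthogonal coweight. Then V is stable under the parabolic subalgebra q = t ⊕ ⊕_{α : ⟨α,h⟩ ≤ ⟨α,z⟩} g_α, and the nilpotent radical of q (spanned by root spaces g_α with ⟨α,h⟩ < ⟨α,z⟩) acts trivially on V. -/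
import Mathlib


/-- The weight space of `χ : t → ℂ` in a `g`-module `E`. -/
noncomputable def wtSpace (g : Type*) [LieRing g] [LieAlgebra ℂ g]
    (t : LieSubalgebra ℂ g)
    (E : Type*) [AddCommGroup E] [Module ℂ E] [LieRingModule g E] [LieModule ℂ g E]
    (χ : Module.Dual ℂ t) : Submodule ℂ E :=
  ⨅ H : t, Module.End.eigenspace (LieModule.toEnd ℂ g E (H : g)) (χ H)

/-- The graded subspace `V = ⊕ V_i ⊆ E`, where `V_i` is the sum of the weight spaces `E_χ`
of `E_i` (i.e. `⟨χ,z⟩ = z_max - 2i`) with `⟨χ,h⟩ = r - 2i`, i.e. the sum of all weight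
spaces with `⟨χ,h⟩ = r - z_max + ⟨χ,z⟩`. -/
noncomputable def VV (g : Type*) [LieRing g] [LieAlgebra ℂ g]
    (t : LieSubalgebra ℂ g)
    (E : Type*) [AddCommGroup E] [Module ℂ E] [LieRingModule g E] [LieModule ℂ g E]
    (z h : t) (r : ℕ) (zmax : ℂ) : Submodule ℂ E :=
  ⨆ (χ : Module.Dual ℂ t) (_ : χ h = (r : ℂ) - zmax + χ z), wtSpace g t E χ

lemma mem_wtSpace_iff (g : Type*) [LieRing g] [LieAlgebra ℂ g]
    (t : LieSubalgebra ℂ g)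
    (E : Type*) [AddCommGroup E] [Module ℂ E] [LieRingModule g E] [LieModule ℂ g E]
    (χ : Module.Dual ℂ t) (v : E) :
    v ∈ wtSpace g t E χ ↔ ∀ H : t, ⁅(H : g), v⁆ = χ H • v := by
  simp [wtSpace, Submodule.mem_iInf, Module.End.mem_eigenspace_iff,
    LieModule.toEnd_apply_apply]

lemma lie_mem_wtSpace (g : Type*) [LieRing g] [LieAlgebra ℂ g]
    (t : LieSubalgebra ℂ g)
    (E : Type*) [AddCommGroup E] [Module ℂ E] [LieRingModule g E] [LieModule ℂ g E]
    {α χ : Module.Dual ℂ t} {x : g} {v : E}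
    (hx : x ∈ wtSpace g t g α) (hv : v ∈ wtSpace g t E χ) :
    ⁅x, v⁆ ∈ wtSpace g t E (α + χ) := by
  rw [mem_wtSpace_iff] at hx hv ⊢
  intro H
  rw [leibniz_lie, hx H, hv H, smul_lie, lie_smul]
  simp [add_smul]

lemma wtSpace_le_VV (g : Type*) [LieRing g] [LieAlgebra ℂ g]
    (t : LieSubalgebra ℂ g)
    (E : Type*) [AddCommGroup E] [Module ℂ E] [LieRingModule g E] [LieModule ℂ g E]
    (z h : t) (r : ℕ) (zmax : ℂ) {χ : Module.Dual ℂ t}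
    (hχ : χ h = (r : ℂ) - zmax + χ z) :
    wtSpace g t E χ ≤ VV g t E z h r zmax :=
  le_iSup₂ (f := fun (χ : Module.Dual ℂ t) (_ : χ h = (r : ℂ) - zmax + χ z) =>
    wtSpace g t E χ) χ hχ

theorem stmt11 (g : Type*) [LieRing g] [LieAlgebra ℂ g] [FiniteDimensional ℂ g]
    [LieAlgebra.IsSemisimple ℂ g]
    (t : LieSubalgebra ℂ g) [LieSubalgebra.IsCartanSubalgebra t]
    (E : Type*) [AddCommGroup E] [Module ℂ E] [LieRingModule g E] [LieModule ℂ g E]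
    [FiniteDimensional ℂ E]
    (z h : t) (r : ℕ) (zmax : ℂ)
    (hkey : ∀ χ : Module.Dual ℂ t, wtSpace g t E χ ≠ ⊥ →
      ∃ i m : ℤ, χ z = zmax - 2 * (i : ℂ) ∧ χ h = (m : ℂ) ∧ (r : ℤ) - 2 * i ≤ m) :
    (∀ H : t, ∀ v ∈ VV g t E z h r zmax, ⁅(H : g), v⁆ ∈ VV g t E z h r zmax) ∧
    (∀ (α : Module.Dual ℂ t) (m l : ℤ), α z = (m : ℂ) → α h = (l : ℂ) → l ≤ m →
      ∀ x ∈ wtSpace g t g α, ∀ v ∈ VV g t E z h r zmax,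
        ⁅x, v⁆ ∈ VV g t E z h r zmax) ∧
    (∀ (α : Module.Dual ℂ t) (m l : ℤ), α z = (m : ℂ) → α h = (l : ℂ) → l < m →
      ∀ x ∈ wtSpace g t g α, ∀ v ∈ VV g t E z h r zmax,
        ⁅x, v⁆ = 0) := by
  -- Core computation: bracketing a weight vector in `V` with a root vector for `α`
  -- (with `⟨α,h⟩ = l ≤ m = ⟨α,z⟩`) stays in `V`, and vanishes if `l < m`.
  have core : ∀ (α : Module.Dual ℂ t) (m l : ℤ), α z = (m : ℂ) → α h = (l : ℂ) →
      ∀ x ∈ wtSpace g t g α, ∀ (χ : Module.Dual ℂ t),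
        χ h = (r : ℂ) - zmax + χ z → ∀ v ∈ wtSpace g t E χ,
        (l ≤ m → ⁅x, v⁆ ∈ VV g t E z h r zmax) ∧ (l < m → ⁅x, v⁆ = 0) := by
    intro α m l hαz hαh x hx χ hχ v hv
    have hbv : ⁅x, v⁆ ∈ wtSpace g t E (α + χ) := lie_mem_wtSpace g t E hx hv
    by_cases hbot : wtSpace g t E (α + χ) = ⊥
    · rw [hbot, Submodule.mem_bot] at hbv
      exact ⟨fun _ => hbv ▸ (VV g t E z h r zmax).zero_mem, fun _ => hbv⟩
    · obtain ⟨i, m', h1, h2, h3⟩ := hkey (α + χ) hbot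
      -- `(α+χ) z = m + χ z` and `(α+χ) h = l + χ h`
      have e1 : (m : ℂ) + χ z = zmax - 2 * (i : ℂ) := by
        simpa [hαz] using h1
      have e2 : (l : ℂ) + ((r : ℂ) - zmax + χ z) = (m' : ℂ) := by
        have := h2
        simp only [LinearMap.add_apply, hαh, hχ] at this
        exact this
      -- hence `m' = l + r - 2 i - m` over ℂ, so over ℤ.
      have e3 : ((l + (r : ℤ) - 2 * i - m : ℤ) : ℂ) = (m' : ℂ) := by
        push_cast
        linear_combination e2 - e1
      have e4 : l + (r : ℤ) - 2 * i - m = m' := by exact_mod_cast e3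
      have hml : m ≤ l := by omega
      constructor
      · intro hlm
        have hlmeq : l = m := le_antisymm hlm hml
        have hcond : (α + χ) h = (r : ℂ) - zmax + (α + χ) z := by
          simp only [LinearMap.add_apply, hαh, hαz, hχ, hlmeq]
          ring
        exact wtSpace_le_VV g t E z h r zmax hcond hbv
      · intro hlt
        omega
  refine ⟨?_, ?_, ?_⟩
  · intro H v hv
    have : VV g t E z h r zmax ≤
        Submodule.comap (LieModule.toEnd ℂ g E (H : g)) (VV g t E z h r zmax) := by
      refine iSup₂_le fun χ hχ w hw => ?_
      have hw' : ⁅(H : g), w⁆ = χ H • w := (mem_wtSpace_iff g t E χ w).mp hw H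
      simp only [Submodule.mem_comap, LieModule.toEnd_apply_apply, hw']
      exact Submodule.smul_mem _ _ (wtSpace_le_VV g t E z h r zmax hχ hw)
    simpa using this hv
  · intro α m l hαz hαh hlm x hx v hv
    have : VV g t E z h r zmax ≤
        Submodule.comap (LieModule.toEnd ℂ g E x) (VV g t E z h r zmax) := by
      refine iSup₂_le fun χ hχ w hw => ?_
      simp only [Submodule.mem_comap, LieModule.toEnd_apply_apply]
      exact (core α m l hαz hαh x hx χ hχ w hw).1 hlm
    simpa using this hv
  · intro α m l hαz hαh hlt x hx v hv
    have : VV g t E z h r zmax ≤ LinearMap.ker (LieModule.toEnd ℂ g E x) := by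
      refine iSup₂_le fun χ hχ w hw => ?_
      simp only [LinearMap.mem_ker, LieModule.toEnd_apply_apply]
      exact (core α m l hαz hαh x hx χ hχ w hw).2 hlt
    simpa using this hv
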